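/- Let Λ > 0. There exists a constant C, depending only on Λ, such that for every 0 < α ≤ 1, every n ≥ 0, and every ψ ∈ L²(ℝ³ × (ℝ³)ⁿ; ℂ) with ‖Pψ‖ < ∞ and (ψ, H_f ψ) < ∞: | ∫ |H(k_{n+1})|² |ψ(l,k₁,…,kₙ)|² / ( |P_{n+1}|² + H_f^{n+1} + α³ )² dl dk₁⋯dk_{n+1} − ‖ψ‖² ∫_{ℝ³} |H(k)|² / ( |k|² + |k| )² dk | ≤ C ( α³ ‖ψ‖² + ‖ψ‖ ‖Pψ‖ + ‖Pψ‖² + (ψ, H_f ψ) ). -/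

import Mathlib

/-!
The reference integrand `|H(k)|² / (|k|² + |k|)²` is the integrand of `I_n` at `P = 0`,
`H_f = 0`, `α³ = 0`. Both denominators are at least `|k|`, and they differ by
`|P|² - 2 P·k + H_f + α³`; since `|D⁻² - B⁻²| ≤ 2 |D - B| / |k|³`, the two integrands differ by at
most `((|P|² + H_f + α³) |k|⁻² + 2 |P| |k|⁻¹) / π²` on `|k| ≤ Λ`, and both powers of `|k|` are
integrable near the origin in three dimensions. Integrating against `|ψ|²` (Fubini) and
estimating `∫ |P| |ψ|²` by Cauchy–Schwarz gives the bound with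
`C = (∫_{|k| ≤ Λ} |k|⁻² + 2 ∫_{|k| ≤ Λ} |k|⁻¹) / π²`.
-/

open MeasureTheory Real Set Metric

section Integration

variable {X Y : Type*} [MeasurableSpace X] [MeasurableSpace Y] {μ : Measure X} {ν : Measure Y}

theorem integrable_mul_of_integrable_sq_mul {u w : X → ℝ} (hw0 : ∀ x, 0 ≤ w x)
    (hw : Integrable w μ) (hu : AEStronglyMeasurable u μ)
    (hu2 : Integrable (fun x => u x ^ 2 * w x) μ) : Integrable (fun x => u x * w x) μ := by
  refine (hw.add hu2).mono' (hu.mul hw.aestronglyMeasurable) (ae_of_all _ fun x => ?_)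
  rw [norm_mul, Real.norm_of_nonneg (hw0 x), Real.norm_eq_abs, Pi.add_apply]
  nlinarith [hw0 x, mul_nonneg (hw0 x) (sq_nonneg (|u x| - 1)), sq_abs (u x)]

theorem integral_mul_le_sqrt_mul_sqrt {u w : X → ℝ} (hu0 : ∀ x, 0 ≤ u x) (hw0 : ∀ x, 0 ≤ w x)
    (hw : Integrable w μ) (hu : AEStronglyMeasurable u μ)
    (hu2 : Integrable (fun x => u x ^ 2 * w x) μ) :
    ∫ x, u x * w x ∂μ ≤ √(∫ x, w x ∂μ) * √(∫ x, u x ^ 2 * w x ∂μ) := by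
  have hsqrt : AEStronglyMeasurable (fun x => √(w x)) μ :=
    hw.aestronglyMeasurable.aemeasurable.sqrt.aestronglyMeasurable
  have hf : MemLp (fun x => √(w x)) (ENNReal.ofReal 2) μ := by
    rw [ENNReal.ofReal_ofNat, memLp_two_iff_integrable_sq hsqrt]
    exact hw.congr (ae_of_all _ fun x => (Real.sq_sqrt (hw0 x)).symm)
  have hg : MemLp (fun x => u x * √(w x)) (ENNReal.ofReal 2) μ := by
    rw [ENNReal.ofReal_ofNat,
      memLp_two_iff_integrable_sq (f := fun x => u x * √(w x)) (hu.mul hsqrt)]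
    exact hu2.congr (ae_of_all _ fun x => by simp only [mul_pow, Real.sq_sqrt (hw0 x)])
  have := integral_mul_le_Lp_mul_Lq_of_nonneg Real.HolderConjugate.two_two
    (ae_of_all _ fun x => Real.sqrt_nonneg (w x))
    (ae_of_all _ fun x => mul_nonneg (hu0 x) (Real.sqrt_nonneg (w x))) hf hg
  simp only [Real.rpow_two, mul_pow, Real.sq_sqrt (hw0 _), ← Real.sqrt_eq_rpow] at this
  refine le_of_eq_of_le (integral_congr_ae (ae_of_all _ fun x => ?_)) this
  rw [mul_left_comm, Real.mul_self_sqrt (hw0 x)]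

theorem abs_integral_prod_mul_sub_le [SFinite μ] [SFinite ν] {w b : X → ℝ} {f : X → Y → ℝ}
    {g : Y → ℝ} (hw0 : ∀ x, 0 ≤ w x) (hw : Integrable w μ) (hwb : Integrable (fun x => w x * b x) μ)
    (hf : Integrable (fun z : X × Y => w z.1 * f z.1 z.2) (μ.prod ν))
    (hfg : ∀ x, |∫ y, f x y ∂ν - ∫ y, g y ∂ν| ≤ b x) :
    |∫ z, w z.1 * f z.1 z.2 ∂(μ.prod ν) - (∫ x, w x ∂μ) * ∫ y, g y ∂ν|
      ≤ ∫ x, w x * b x ∂μ := by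
  have hfubini : ∫ z, w z.1 * f z.1 z.2 ∂(μ.prod ν) = ∫ x, w x * ∫ y, f x y ∂ν ∂μ := by
    simp only [integral_prod _ hf, integral_const_mul]
  have hwf : Integrable (fun x => w x * ∫ y, f x y ∂ν) μ := by
    simpa only [integral_const_mul] using hf.integral_prod_left
  rw [hfubini, ← integral_mul_const, ← integral_sub hwf (hw.mul_const _), ← Real.norm_eq_abs]
  refine norm_integral_le_of_norm_le hwb (ae_of_all _ fun x => ?_)
  rw [← mul_sub, norm_mul, Real.norm_of_nonneg (hw0 x), Real.norm_eq_abs]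
  exact mul_le_mul_of_nonneg_left (hfg x) (hw0 x)

end Integration

theorem abs_inv_sq_sub_inv_sq_le {x D B : ℝ} (hx : 0 < x) (hD : x ≤ D) (hB : x ≤ B) :
    |(D ^ 2)⁻¹ - (B ^ 2)⁻¹| ≤ 2 * |D - B| / x ^ 3 := by
  have hD0 : 0 < D := hx.trans_le hD
  have hB0 : 0 < B := hx.trans_le hB
  have hcube : (B + D) * x ^ 3 ≤ 2 * (D ^ 2 * B ^ 2) := by
    have h1 : x ^ 3 ≤ D ^ 2 * B := by
      calc x ^ 3 = x * x * x := by ring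
        _ ≤ D * D * B := by gcongr
        _ = D ^ 2 * B := by ring
    have h2 : x ^ 3 ≤ D * B ^ 2 := by
      calc x ^ 3 = x * x * x := by ring
        _ ≤ D * B * B := by gcongr
        _ = D * B ^ 2 := by ring
    nlinarith [mul_le_mul_of_nonneg_left h1 hB0.le, mul_le_mul_of_nonneg_left h2 hD0.le]
  rw [inv_sub_inv (by positivity) (by positivity), abs_div,
    abs_of_pos (by positivity : (0:ℝ) < D ^ 2 * B ^ 2),
    show B ^ 2 - D ^ 2 = (B + D) * -(D - B) by ring, abs_mul, abs_neg,
    abs_of_pos (by positivity : 0 < B + D), div_le_div_iff₀ (by positivity) (by positivity)]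
  nlinarith [abs_nonneg (D - B), mul_le_mul_of_nonneg_left hcube (abs_nonneg (D - B))]

noncomputable section Kernel

variable {E : Type*} [NormedAddCommGroup E]

def formFactorSq (Λ : ℝ) (k : E) : ℝ := if ‖k‖ ≤ Λ then ‖k‖ / (2 * π ^ 2) else 0

def cutoffInvNormPow (Λ : ℝ) (m : ℕ) (k : E) : ℝ := if ‖k‖ ≤ Λ then (‖k‖ ^ m)⁻¹ else 0

def resolventDenom (a : ℝ) (P : E) (S : ℝ) (k : E) : ℝ := ‖P - k‖ ^ 2 + (S + ‖k‖) + a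

/-- With `a = α³`, `P = Pₙ`, `S = H_fⁿ` this is the integrand of `I_n`; at `a = P = S = 0` it is
that of `⟨0|E𝒜⁻¹E*|0⟩`. -/
def resolventKernel (Λ a : ℝ) (P : E) (S : ℝ) (k : E) : ℝ :=
  formFactorSq Λ k / resolventDenom a P S k ^ 2

theorem formFactorSq_nonneg (Λ : ℝ) (k : E) : 0 ≤ formFactorSq Λ k := by
  unfold formFactorSq; split_ifs <;> positivity

theorem cutoffInvNormPow_nonneg (Λ : ℝ) (m : ℕ) (k : E) : 0 ≤ cutoffInvNormPow Λ m k := by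
  unfold cutoffInvNormPow; split_ifs <;> positivity

theorem resolventKernel_nonneg (Λ a : ℝ) (P : E) (S : ℝ) (k : E) :
    0 ≤ resolventKernel Λ a P S k :=
  div_nonneg (formFactorSq_nonneg Λ k) (sq_nonneg _)

theorem norm_le_resolventDenom {a S : ℝ} (ha : 0 ≤ a) (hS : 0 ≤ S) (P k : E) :
    ‖k‖ ≤ resolventDenom a P S k := by
  unfold resolventDenom
  nlinarith [sq_nonneg ‖P - k‖]

theorem formFactorSq_div_sq_le {Λ D : ℝ} {k : E} (hD : ‖k‖ ≤ D) :
    formFactorSq Λ k / D ^ 2 ≤ cutoffInvNormPow Λ 1 k / (2 * π ^ 2) := by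
  unfold formFactorSq cutoffInvNormPow
  split_ifs
  · rcases (norm_nonneg k).eq_or_lt with hk | hk
    · simp [← hk]
    · calc ‖k‖ / (2 * π ^ 2) / D ^ 2 ≤ ‖k‖ / (2 * π ^ 2) / ‖k‖ ^ 2 := by gcongr
        _ = (‖k‖ ^ 1)⁻¹ / (2 * π ^ 2) := by field_simp
  · simp

theorem resolventKernel_le {a S : ℝ} (ha : 0 ≤ a) (hS : 0 ≤ S) (Λ : ℝ) (P k : E) :
    resolventKernel Λ a P S k ≤ cutoffInvNormPow Λ 1 k / (2 * π ^ 2) :=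
  formFactorSq_div_sq_le (norm_le_resolventDenom ha hS P k)

theorem abs_resolventDenom_sub_le [InnerProductSpace ℝ E] {a S : ℝ} (ha : 0 ≤ a) (hS : 0 ≤ S)
    (P k : E) :
    |resolventDenom a P S k - resolventDenom 0 0 0 k| ≤ ‖P‖ ^ 2 + S + a + 2 * ‖P‖ * ‖k‖ := by
  have hinner := abs_le.mp (abs_real_inner_le_norm P k)
  rw [resolventDenom, resolventDenom, zero_sub, norm_neg, norm_sub_sq_real, abs_le]
  constructor <;> nlinarith [sq_nonneg ‖P‖, mul_nonneg (norm_nonneg P) (norm_nonneg k)]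

theorem abs_resolventKernel_sub_le [InnerProductSpace ℝ E] {a S : ℝ} (ha : 0 ≤ a) (hS : 0 ≤ S)
    (Λ : ℝ) (P k : E) :
    |resolventKernel Λ a P S k - resolventKernel Λ 0 0 0 k|
      ≤ ((‖P‖ ^ 2 + S + a) * cutoffInvNormPow Λ 2 k + 2 * ‖P‖ * cutoffInvNormPow Λ 1 k)
        / π ^ 2 := by
  rw [resolventKernel, resolventKernel, div_eq_mul_inv, div_eq_mul_inv, ← mul_sub, abs_mul,
    abs_of_nonneg (formFactorSq_nonneg Λ k)]
  unfold formFactorSq cutoffInvNormPow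
  split_ifs
  · rcases (norm_nonneg k).eq_or_lt with hk | hk
    · simp [← hk]
    · calc ‖k‖ / (2 * π ^ 2) * |(resolventDenom a P S k ^ 2)⁻¹ - (resolventDenom 0 0 0 k ^ 2)⁻¹|
          ≤ ‖k‖ / (2 * π ^ 2) * (2 * (‖P‖ ^ 2 + S + a + 2 * ‖P‖ * ‖k‖) / ‖k‖ ^ 3) := by
            gcongr
            refine (abs_inv_sq_sub_inv_sq_le hk (norm_le_resolventDenom ha hS P k)
              (norm_le_resolventDenom le_rfl le_rfl 0 k)).trans ?_
            gcongr
            exact abs_resolventDenom_sub_le ha hS P k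
        _ = _ := by field_simp
  · simp

end Kernel

section KernelIntegrals

variable {E : Type*} [NormedAddCommGroup E] [MeasurableSpace E] [BorelSpace E]

theorem integrable_cutoffInvNormPow [NormedSpace ℝ E] [FiniteDimensional ℝ E] {μ : Measure E}
    [μ.IsAddHaarMeasure] {m : ℕ} (hm : m < Module.finrank ℝ E) (Λ : ℝ) :
    Integrable (cutoffInvNormPow Λ m) μ := by
  have hloc : LocallyIntegrable (fun k : E => (‖k‖ ^ m)⁻¹) μ := by
    refine locallyIntegrable_of_norm_le_rpow (C := 1) (α := m) (by omega) (by exact_mod_cast hm)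
      (ae_of_all _ fun k => ?_) (by fun_prop)
    rw [Real.rpow_neg (norm_nonneg _), Real.rpow_natCast, one_mul, norm_inv, norm_pow, norm_norm]
  have hball := hloc.integrableOn_isCompact (isCompact_closedBall 0 Λ)
  rw [← integrable_indicator_iff measurableSet_closedBall] at hball
  refine hball.congr (ae_of_all _ fun k => ?_)
  simp [cutoffInvNormPow, indicator]

theorem measurable_formFactorSq (Λ : ℝ) : Measurable (formFactorSq Λ : E → ℝ) :=
  Measurable.ite (measurableSet_le measurable_norm measurable_const) (by fun_prop) (by fun_prop)

theorem setIntegral_eq_integral_resolventKernel_zero (μ : Measure E) (Λ : ℝ) :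
    ∫ k in {k : E | ‖k‖ ≤ Λ}, (‖k‖ / (2 * π ^ 2)) / (‖k‖ ^ 2 + ‖k‖) ^ 2 ∂μ
      = ∫ k, resolventKernel Λ 0 0 0 k ∂μ := by
  rw [← integral_indicator (measurableSet_le measurable_norm measurable_const)]
  refine integral_congr_ae (ae_of_all _ fun k => ?_)
  by_cases hk : ‖k‖ ≤ Λ <;> simp [indicator, resolventKernel, resolventDenom, formFactorSq, hk]

variable [InnerProductSpace ℝ E] [FiniteDimensional ℝ E] {μ : Measure E} [μ.IsAddHaarMeasure]

theorem integrable_resolventKernel (hE : 1 < Module.finrank ℝ E) {a S : ℝ} (ha : 0 ≤ a)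
    (hS : 0 ≤ S) (Λ : ℝ) (P : E) : Integrable (resolventKernel Λ a P S) μ := by
  refine ((integrable_cutoffInvNormPow hE Λ).div_const (2 * π ^ 2)).mono'
    ((measurable_formFactorSq Λ).div (by unfold resolventDenom; fun_prop)).aestronglyMeasurable
    (ae_of_all _ fun k => ?_)
  rw [Real.norm_of_nonneg (resolventKernel_nonneg Λ a P S k)]
  exact resolventKernel_le ha hS Λ P k

theorem abs_integral_resolventKernel_sub_le (hE : 2 < Module.finrank ℝ E) {a S : ℝ}
    (ha : 0 ≤ a) (hS : 0 ≤ S) (Λ : ℝ) (P : E) :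
    |∫ k, resolventKernel Λ a P S k ∂μ - ∫ k, resolventKernel Λ 0 0 0 k ∂μ|
      ≤ ((‖P‖ ^ 2 + S + a) * ∫ k, cutoffInvNormPow Λ 2 k ∂μ
          + 2 * ‖P‖ * ∫ k, cutoffInvNormPow Λ 1 k ∂μ) / π ^ 2 := by
  have hc2 := integrable_cutoffInvNormPow (μ := μ) hE Λ
  have hc1 := integrable_cutoffInvNormPow (μ := μ) (by omega : 1 < Module.finrank ℝ E) Λ
  rw [← integral_sub (integrable_resolventKernel (by omega) ha hS Λ P)
    (integrable_resolventKernel (by omega) le_rfl le_rfl Λ 0), ← integral_const_mul,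
    ← integral_const_mul, ← integral_add (hc2.const_mul _) (hc1.const_mul _), ← integral_div,
    ← Real.norm_eq_abs]
  exact norm_integral_le_of_norm_le (((hc2.const_mul _).add (hc1.const_mul _)).div_const _)
    (ae_of_all _ fun k => abs_resolventKernel_sub_le ha hS Λ P k)

variable {X : Type*} [MeasurableSpace X] {ν : Measure X}
  {w : X → ℝ} {P : X → E} {S : X → ℝ} {a : ℝ}

theorem integrable_prod_resolventKernel (hE : 1 < Module.finrank ℝ E) (ha : 0 ≤ a)
    (hS0 : ∀ x, 0 ≤ S x) (hw : Integrable w ν) (hP : Measurable P) (hS : Measurable S)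
    (Λ : ℝ) :
    Integrable (fun z : X × E => w z.1 * resolventKernel Λ a (P z.1) (S z.1) z.2) (ν.prod μ) := by
  have hmeas : Measurable fun z : X × E => resolventKernel Λ a (P z.1) (S z.1) z.2 :=
    ((measurable_formFactorSq Λ).comp measurable_snd).div (by unfold resolventDenom; fun_prop)
  have hc₁ := (integrable_cutoffInvNormPow (μ := μ) hE Λ).div_const (2 * π ^ 2)
  refine (hw.norm.mul_prod hc₁).mono'
    (hw.aestronglyMeasurable.comp_fst.mul hmeas.aestronglyMeasurable) (ae_of_all _ fun z => ?_)
  rw [norm_mul, Real.norm_of_nonneg (resolventKernel_nonneg _ _ _ _ _)]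
  exact mul_le_mul_of_nonneg_left (resolventKernel_le ha (hS0 z.1) Λ _ _) (norm_nonneg _)

theorem abs_integral_prod_resolventKernel_sub_le [SFinite ν] (hE : 2 < Module.finrank ℝ E)
    (ha : 0 ≤ a) (hw0 : ∀ x, 0 ≤ w x) (hS0 : ∀ x, 0 ≤ S x) (hw : Integrable w ν) (hP : Measurable P)
    (hS : Measurable S) (hPw : Integrable (fun x => ‖P x‖ * w x) ν)
    (hP2w : Integrable (fun x => ‖P x‖ ^ 2 * w x) ν) (hSw : Integrable (fun x => S x * w x) ν)
    (Λ : ℝ) :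
    |∫ z, w z.1 * resolventKernel Λ a (P z.1) (S z.1) z.2 ∂(ν.prod μ)
        - (∫ x, w x ∂ν) * ∫ k, resolventKernel Λ 0 0 0 k ∂μ|
      ≤ ((∫ k, cutoffInvNormPow Λ 2 k ∂μ) * (a * ∫ x, w x ∂ν + ∫ x, ‖P x‖ ^ 2 * w x ∂ν
            + ∫ x, S x * w x ∂ν) + 2 * (∫ k, cutoffInvNormPow Λ 1 k ∂μ) * ∫ x, ‖P x‖ * w x ∂ν)
          / π ^ 2 := by
  set C₁ := ∫ k, cutoffInvNormPow Λ 1 k ∂μ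
  set C₂ := ∫ k, cutoffInvNormPow Λ 2 k ∂μ
  have hwP2w : Integrable (fun x => a * w x + ‖P x‖ ^ 2 * w x) ν := (hw.const_mul a).add hP2w
  have hsum : Integrable (fun x => a * w x + ‖P x‖ ^ 2 * w x + S x * w x) ν := hwP2w.add hSw
  have hbound := abs_integral_prod_mul_sub_le (b := fun x =>
      ((‖P x‖ ^ 2 + S x + a) * C₂ + 2 * ‖P x‖ * C₁) / π ^ 2) hw0 hw
    ((((hsum.const_mul C₂).add (hPw.const_mul (2 * C₁))).div_const (π ^ 2)).congr
      (ae_of_all _ fun x => by simp only [Pi.add_apply]; ring))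
    (integrable_prod_resolventKernel (by omega) ha hS0 hw hP hS Λ)
    (fun x => abs_integral_resolventKernel_sub_le hE ha (hS0 x) Λ (P x))
  refine hbound.trans_eq ?_
  have hsplit : ∫ x, (a * w x + ‖P x‖ ^ 2 * w x + S x * w x) ∂ν
      = a * ∫ x, w x ∂ν + ∫ x, ‖P x‖ ^ 2 * w x ∂ν + ∫ x, S x * w x ∂ν := by
    rw [integral_add hwP2w hSw, integral_add (hw.const_mul a) hP2w,
      integral_const_mul]
  rw [← hsplit, ← integral_const_mul, ← integral_const_mul,
    ← integral_add (hsum.const_mul C₂) (hPw.const_mul (2 * C₁)), ← integral_div]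
  exact integral_congr_ae (ae_of_all _ fun x => by ring)

theorem abs_integral_prod_resolventKernel_sub_le_sqrt [SFinite ν] (hE : 2 < Module.finrank ℝ E)
    (ha : 0 ≤ a) (hw0 : ∀ x, 0 ≤ w x) (hS0 : ∀ x, 0 ≤ S x) (hw : Integrable w ν)
    (hP : Measurable P) (hS : Measurable S) (hP2w : Integrable (fun x => ‖P x‖ ^ 2 * w x) ν)
    (hSw : Integrable (fun x => S x * w x) ν) (Λ : ℝ) :
    |∫ z, w z.1 * resolventKernel Λ a (P z.1) (S z.1) z.2 ∂(ν.prod μ)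
        - (∫ x, w x ∂ν) * ∫ k, resolventKernel Λ 0 0 0 k ∂μ|
      ≤ ((∫ k, cutoffInvNormPow Λ 2 k ∂μ) + 2 * ∫ k, cutoffInvNormPow Λ 1 k ∂μ) / π ^ 2
        * (a * ∫ x, w x ∂ν + √(∫ x, w x ∂ν) * √(∫ x, ‖P x‖ ^ 2 * w x ∂ν)
          + ∫ x, ‖P x‖ ^ 2 * w x ∂ν + ∫ x, S x * w x ∂ν) := by
  have hPw := integrable_mul_of_integrable_sq_mul hw0 hw hP.norm.aestronglyMeasurable hP2w
  have hCS := integral_mul_le_sqrt_mul_sqrt (fun x => norm_nonneg (P x)) hw0 hw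
    hP.norm.aestronglyMeasurable hP2w
  have hC₁ : 0 ≤ ∫ k, cutoffInvNormPow Λ 1 k ∂μ := integral_nonneg (cutoffInvNormPow_nonneg Λ 1)
  have hC₂ : 0 ≤ ∫ k, cutoffInvNormPow Λ 2 k ∂μ := integral_nonneg (cutoffInvNormPow_nonneg Λ 2)
  have hA : 0 ≤ ∫ x, w x ∂ν := integral_nonneg hw0
  have hB : 0 ≤ ∫ x, ‖P x‖ ^ 2 * w x ∂ν :=
    integral_nonneg fun x => mul_nonneg (sq_nonneg ‖P x‖) (hw0 x)
  have hH : 0 ≤ ∫ x, S x * w x ∂ν := integral_nonneg fun x => mul_nonneg (hS0 x) (hw0 x)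
  refine (abs_integral_prod_resolventKernel_sub_le hE ha hw0 hS0 hw hP hS hPw hP2w hSw Λ).trans ?_
  rw [div_mul_eq_mul_div]
  gcongr
  nlinarith [mul_le_mul_of_nonneg_left hCS hC₁,
    mul_nonneg hC₂ (mul_nonneg (Real.sqrt_nonneg (∫ x, w x ∂ν))
      (Real.sqrt_nonneg (∫ x, ‖P x‖ ^ 2 * w x ∂ν))),
    mul_nonneg hC₁ (mul_nonneg ha hA), mul_nonneg hC₁ hB, mul_nonneg hC₁ hH]

end KernelIntegrals

theorem diagonal_term_In_general (Λ : ℝ) :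
    ∃ C : ℝ, ∀ (α : ℝ), 0 < α → α ≤ 1 → ∀ (n : ℕ)
      (ψ : EuclideanSpace ℝ (Fin 3) → (Fin n → EuclideanSpace ℝ (Fin 3)) → ℂ),
      AEStronglyMeasurable
        (fun p : EuclideanSpace ℝ (Fin 3) × (Fin n → EuclideanSpace ℝ (Fin 3)) =>
          ψ p.1 p.2) volume →
      Integrable
        (fun p : EuclideanSpace ℝ (Fin 3) × (Fin n → EuclideanSpace ℝ (Fin 3)) =>
          ‖ψ p.1 p.2‖ ^ 2) volume →
      Integrable
        (fun p : EuclideanSpace ℝ (Fin 3) × (Fin n → EuclideanSpace ℝ (Fin 3)) =>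
          ‖p.1 - ∑ i, p.2 i‖ ^ 2 * ‖ψ p.1 p.2‖ ^ 2) volume →
      Integrable
        (fun p : EuclideanSpace ℝ (Fin 3) × (Fin n → EuclideanSpace ℝ (Fin 3)) =>
          (∑ i, ‖p.2 i‖) * ‖ψ p.1 p.2‖ ^ 2) volume →
      |(∫ p : (EuclideanSpace ℝ (Fin 3) × (Fin n → EuclideanSpace ℝ (Fin 3))) ×
            EuclideanSpace ℝ (Fin 3),
          (if ‖p.2‖ ≤ Λ then ‖p.2‖ / (2 * π ^ 2) else 0) *
            ‖ψ p.1.1 p.1.2‖ ^ 2 /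
            (‖p.1.1 - (∑ i, p.1.2 i) - p.2‖ ^ 2 +
              ((∑ i, ‖p.1.2 i‖) + ‖p.2‖) + α ^ 3) ^ 2) -
        (∫ p : EuclideanSpace ℝ (Fin 3) × (Fin n → EuclideanSpace ℝ (Fin 3)),
            ‖ψ p.1 p.2‖ ^ 2) *
          ∫ k in {k : EuclideanSpace ℝ (Fin 3) | ‖k‖ ≤ Λ},
            (‖k‖ / (2 * π ^ 2)) / (‖k‖ ^ 2 + ‖k‖) ^ 2| ≤
      C * (α ^ 3 *
            (∫ p : EuclideanSpace ℝ (Fin 3) × (Fin n → EuclideanSpace ℝ (Fin 3)),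
              ‖ψ p.1 p.2‖ ^ 2) +
          Real.sqrt
              (∫ p : EuclideanSpace ℝ (Fin 3) ×
                  (Fin n → EuclideanSpace ℝ (Fin 3)), ‖ψ p.1 p.2‖ ^ 2) *
            Real.sqrt
              (∫ p : EuclideanSpace ℝ (Fin 3) ×
                  (Fin n → EuclideanSpace ℝ (Fin 3)),
                ‖p.1 - ∑ i, p.2 i‖ ^ 2 * ‖ψ p.1 p.2‖ ^ 2) +
          (∫ p : EuclideanSpace ℝ (Fin 3) × (Fin n → EuclideanSpace ℝ (Fin 3)),
            ‖p.1 - ∑ i, p.2 i‖ ^ 2 * ‖ψ p.1 p.2‖ ^ 2) +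
          ∫ p : EuclideanSpace ℝ (Fin 3) × (Fin n → EuclideanSpace ℝ (Fin 3)),
            (∑ i, ‖p.2 i‖) * ‖ψ p.1 p.2‖ ^ 2) := by
  refine ⟨((∫ k : EuclideanSpace ℝ (Fin 3), cutoffInvNormPow Λ 2 k)
    + 2 * ∫ k : EuclideanSpace ℝ (Fin 3), cutoffInvNormPow Λ 1 k) / π ^ 2,
    fun α hα _ n ψ _ hψ hPψ hHψ => ?_⟩
  have hP : Continuous fun p : EuclideanSpace ℝ (Fin 3) × (Fin n → EuclideanSpace ℝ (Fin 3)) =>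
      p.1 - ∑ i, p.2 i := by fun_prop
  have hS : Continuous fun p : EuclideanSpace ℝ (Fin 3) × (Fin n → EuclideanSpace ℝ (Fin 3)) =>
      ∑ i, ‖p.2 i‖ := by fun_prop
  rw [setIntegral_eq_integral_resolventKernel_zero]
  refine le_of_eq_of_le ?_ (abs_integral_prod_resolventKernel_sub_le_sqrt (by simp)
    (pow_pos hα 3).le (fun _ => sq_nonneg _) (fun _ => Finset.sum_nonneg fun _ _ => norm_nonneg _)
    hψ hP.measurable hS.measurable hPψ hHψ Λ)
  congr 2
  exact integral_congr_ae (ae_of_all _ fun z => by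
    simp only [resolventKernel, resolventDenom, formFactorSq, sub_sub]; ring)

/-- Diagonal term `I_n` of Step 1 of Lemma B.1: with form factor
`|H(k)|² = χ(|k|)²|k|/(2π²)`, `P_{n+1} = l − Σᵢkᵢ − k_{n+1}`,
`H_f^{n+1} = Σᵢ|kᵢ| + |k_{n+1}|`, there is `C = C(Λ)` such that for all
`0 < α ≤ 1`, all `n` and all `ψ`,
`| ∫ |H(k_{n+1})|²|ψ|²/(|P_{n+1}|² + H_f^{n+1} + α³)² − ‖ψ‖² ∫ |H(k)|²/(|k|²+|k|)² dk |
  ≤ C (α³‖ψ‖² + ‖ψ‖‖Pψ‖ + ‖Pψ‖² + (ψ,H_fψ))`. -/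
theorem diagonal_term_In (Λ : ℝ) (hΛ : 0 < Λ) :
    ∃ C : ℝ, ∀ (α : ℝ), 0 < α → α ≤ 1 → ∀ (n : ℕ)
      (ψ : EuclideanSpace ℝ (Fin 3) → (Fin n → EuclideanSpace ℝ (Fin 3)) → ℂ),
      AEStronglyMeasurable
        (fun p : EuclideanSpace ℝ (Fin 3) × (Fin n → EuclideanSpace ℝ (Fin 3)) =>
          ψ p.1 p.2) volume →
      Integrable
        (fun p : EuclideanSpace ℝ (Fin 3) × (Fin n → EuclideanSpace ℝ (Fin 3)) =>
          ‖ψ p.1 p.2‖ ^ 2) volume →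
      Integrable
        (fun p : EuclideanSpace ℝ (Fin 3) × (Fin n → EuclideanSpace ℝ (Fin 3)) =>
          ‖p.1 - ∑ i, p.2 i‖ ^ 2 * ‖ψ p.1 p.2‖ ^ 2) volume →
      Integrable
        (fun p : EuclideanSpace ℝ (Fin 3) × (Fin n → EuclideanSpace ℝ (Fin 3)) =>
          (∑ i, ‖p.2 i‖) * ‖ψ p.1 p.2‖ ^ 2) volume →
      |(∫ p : (EuclideanSpace ℝ (Fin 3) × (Fin n → EuclideanSpace ℝ (Fin 3))) ×
            EuclideanSpace ℝ (Fin 3),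
          (if ‖p.2‖ ≤ Λ then ‖p.2‖ / (2 * π ^ 2) else 0) *
            ‖ψ p.1.1 p.1.2‖ ^ 2 /
            (‖p.1.1 - (∑ i, p.1.2 i) - p.2‖ ^ 2 +
              ((∑ i, ‖p.1.2 i‖) + ‖p.2‖) + α ^ 3) ^ 2) -
        (∫ p : EuclideanSpace ℝ (Fin 3) × (Fin n → EuclideanSpace ℝ (Fin 3)),
            ‖ψ p.1 p.2‖ ^ 2) *
          ∫ k in {k : EuclideanSpace ℝ (Fin 3) | ‖k‖ ≤ Λ},
            (‖k‖ / (2 * π ^ 2)) / (‖k‖ ^ 2 + ‖k‖) ^ 2| ≤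
      C * (α ^ 3 *
            (∫ p : EuclideanSpace ℝ (Fin 3) × (Fin n → EuclideanSpace ℝ (Fin 3)),
              ‖ψ p.1 p.2‖ ^ 2) +
          Real.sqrt
              (∫ p : EuclideanSpace ℝ (Fin 3) ×
                  (Fin n → EuclideanSpace ℝ (Fin 3)), ‖ψ p.1 p.2‖ ^ 2) *
            Real.sqrt
              (∫ p : EuclideanSpace ℝ (Fin 3) ×
                  (Fin n → EuclideanSpace ℝ (Fin 3)),
                ‖p.1 - ∑ i, p.2 i‖ ^ 2 * ‖ψ p.1 p.2‖ ^ 2) +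
          (∫ p : EuclideanSpace ℝ (Fin 3) × (Fin n → EuclideanSpace ℝ (Fin 3)),
            ‖p.1 - ∑ i, p.2 i‖ ^ 2 * ‖ψ p.1 p.2‖ ^ 2) +
          ∫ p : EuclideanSpace ℝ (Fin 3) × (Fin n → EuclideanSpace ℝ (Fin 3)),
            (∑ i, ‖p.2 i‖) * ‖ψ p.1 p.2‖ ^ 2) :=
  diagonal_term_In_general Λ
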